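/- Let N be binomially distributed with parameters n and p ∈ (0,1), let a ≥ 0 and λ ≤ 0. Then log E[exp(λ a (N - np)/√(np))] ≤ λ² a² / 2. -/
import Mathlib

open Finset

lemma exp_le_quad (t : ℝ) (ht : t ≤ 0) : Real.exp t ≤ 1 + t + t ^ 2 / 2 := by
  set s : ℝ := -t with hs
  have hs0 : 0 ≤ s := by linarith
  have h1 : 1 + s + s ^ 2 / 2 ≤ Real.exp s := by
    have := Real.sum_le_exp_of_nonneg hs0 3
    simp [Finset.sum_range_succ, Nat.factorial] at this
    nlinarith [this]
  have h2 : Real.exp t * Real.exp s = 1 := by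
    rw [← Real.exp_add]; simp [hs]
  have h3 : (0:ℝ) < Real.exp t := Real.exp_pos t
  have h4 : 1 + t + t ^ 2 / 2 = 1 - s + s ^ 2 / 2 := by rw [hs]; ring
  rw [h4]
  nlinarith [h1, h2, h3, sq_nonneg s, sq_nonneg (s*s)]

/-- Sub-Gaussian lower-tail bound for the moment generating function of a
standardized binomial random variable: for `N ~ Binomial(n, p)`, `a ≥ 0` and
`λ ≤ 0`, `log E[exp(λ a (N - np)/√(np))] ≤ λ² a² / 2`. -/
theorem binomial_mgf_lower_tail (n : ℕ) (hn : 1 ≤ n) (p : ℝ)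
    (hp0 : 0 < p) (hp1 : p < 1) (a : ℝ) (ha : 0 ≤ a) (lam : ℝ) (hlam : lam ≤ 0) :
    Real.log (∑ m ∈ Finset.range (n + 1),
        (n.choose m : ℝ) * p ^ m * (1 - p) ^ (n - m) *
          Real.exp (lam * a * ((m : ℝ) - n * p) / Real.sqrt (n * p)))
      ≤ lam ^ 2 * a ^ 2 / 2 := by
  have hnp : (0:ℝ) < n * p := by
    have : (1:ℝ) ≤ n := by exact_mod_cast hn
    nlinarith
  have hsq : Real.sqrt (n * p) > 0 := Real.sqrt_pos.mpr hnp
  set t : ℝ := lam * a / Real.sqrt (n * p) with hT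
  have ht : t ≤ 0 := by
    apply div_nonpos_of_nonpos_of_nonneg
    · exact mul_nonpos_of_nonpos_of_nonneg hlam ha
    · exact le_of_lt hsq
  -- rewrite sum
  have hterm : ∀ m ∈ Finset.range (n + 1),
      (n.choose m : ℝ) * p ^ m * (1 - p) ^ (n - m) *
          Real.exp (lam * a * ((m : ℝ) - n * p) / Real.sqrt (n * p))
      = Real.exp (-(t * (n * p))) * ((p * Real.exp t) ^ m * (1 - p) ^ (n - m) * (n.choose m : ℝ)) := by
    intro m _
    have : lam * a * ((m : ℝ) - n * p) / Real.sqrt (n * p) = t * m + (-(t * (n * p))) := by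
      rw [hT]; field_simp; ring
    rw [this, Real.exp_add, mul_pow, ← Real.exp_nat_mul]
    ring_nf
  rw [Finset.sum_congr rfl hterm, ← Finset.mul_sum, ← add_pow]
  set q : ℝ := p * Real.exp t + (1 - p) with hq
  have hq0 : 0 < q := by
    have := Real.exp_pos t
    nlinarith
  rw [Real.log_mul (by positivity) (by positivity), Real.log_exp, Real.log_pow]
  -- key bound: log q ≤ p*t + p*t^2/2
  have hlogq : Real.log q ≤ p * t + p * t ^ 2 / 2 := by
    have h1 : Real.log q ≤ q - 1 := Real.log_le_sub_one_of_pos hq0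
    have h2 : Real.exp t ≤ 1 + t + t ^ 2 / 2 := exp_le_quad t ht
    have : q - 1 = p * (Real.exp t - 1) := by rw [hq]; ring
    nlinarith
  have hfin : (-(t * (n * p))) + n * Real.log q ≤ n * p * t ^ 2 / 2 := by
    have hn0 : (0:ℝ) ≤ n := by positivity
    nlinarith [hlogq, hn0]
  refine hfin.trans (le_of_eq ?_)
  have : t ^ 2 = lam ^ 2 * a ^ 2 / (n * p) := by
    rw [hT, div_pow, Real.sq_sqrt hnp.le]; ring
  rw [this]; field_simp
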